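/- Any two sectors of Σ are either equal or disjoint; moreover, if (A) and 3-MSP hold, the relation s ≈ t (s = t, or there exists r ∈ {s,t}⁻ with r ≠ s, r ≠ t) is an equivalence relation whose classes are sectors, so Σ is a union of sectors. -/

import Mathlib

/-!
Read `S.bar {p, q}` as the line through `p` and `q`. Two sectors sharing a state `p` coincide:
a state `t` of one of them outside the other would give a pair `{p, t}` with a superposition
other than `p` and `t`, which the second sector forbids.

For `≈`, property (A) (`xi p ⊆ xi q → p = q`) and 2-MSP make a line determined by any two of
its points, and transitivity is Pasch's axiom: in a triangle `s t u` with a third point `a` on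
`st` and `b` on `tu`, the state `a` is a minimal superposition of `{s, u, b}`, so 3-MSP yields
a point of the line `ab` on `su` other than `s` and `u`. The classes of `≈` are λ-closed because a
superposition `r ≠ q` of `{p, q}` satisfies `p ≈ r`.
-/

universe u v

/-- A state property system: states, a complete lattice of properties, and
the actuality map `xi` assigning to each state the set of actual properties. -/
structure SPS (σ : Type u) (L : Type v) [CompleteLattice L] where
  xi : σ → Set L
  top_mem : ∀ p, ⊤ ∈ xi p
  bot_not_mem : ∀ p, ⊥ ∉ xi p
  sInf_mem : ∀ (p : σ) (A : Set L), (∀ a ∈ A, a ∈ xi p) ↔ sInf A ∈ xi p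
  le_iff : ∀ a b : L, a ≤ b ↔ ∀ r, a ∈ xi r → b ∈ xi r

variable {σ : Type u} {L : Type v} [CompleteLattice L]

/-- λ{p,q} : the set of superpositions of the pair p, q. -/
def SPS.lamPair (S : SPS σ L) (p q : σ) : Set σ := {s | S.xi p ∩ S.xi q ⊆ S.xi s}

/-- A set is λ-closed if it contains λ{p,q} for each pair of its points. -/
def SPS.lamClosed (S : SPS σ L) (T : Set σ) : Prop :=
  ∀ p ∈ T, ∀ q ∈ T, S.lamPair p q ⊆ T

/-- λ(P) : the intersection of all λ-closed sets containing P. -/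
def SPS.lam (S : SPS σ L) (P : Set σ) : Set σ :=
  ⋂₀ {G | S.lamClosed G ∧ P ⊆ G}

/-- The set of superpositions of a set of states. -/
def SPS.bar (S : SPS σ L) (T : Set σ) : Set σ :=
  {p | (⋂ s ∈ T, S.xi s) ⊆ S.xi p}

/-- Property (A): at least two states and `xi` order-reflecting (injective). -/
def SPS.propA (S : SPS σ L) : Prop :=
  (∃ p q : σ, p ≠ q) ∧ ∀ p q : σ, S.xi p ⊆ S.xi q → p = q

/-- p is a minimal superposition of A. -/
def SPS.minSup (S : SPS σ L) (A : Set σ) (p : σ) : Prop :=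
  p ∈ S.bar A ∧ ∀ Q : Set σ, Q ⊂ A → p ∉ S.bar Q

/-- The minimal superposition principle for a given set A. -/
def SPS.MSPon (S : SPS σ L) (A : Set σ) : Prop :=
  ∀ p : σ, S.minSup A p →
    ∀ S₁ S₂ : Set σ, S₁ ⊂ A → S₂ ⊂ A → S₁ ∩ S₂ = ∅ → S₁ ∪ S₂ = A →
      (S.bar (S₁ ∪ {p}) ∩ S.bar S₂).Nonempty

/-- n-MSP : MSP for all sets of cardinality at most n. -/
def SPS.nMSP (S : SPS σ L) (n : ℕ) : Prop :=
  ∀ A : Set σ, A.Finite → A.ncard ≤ n → S.MSPon A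

/-- f-MSP : MSP for all finite sets. -/
def SPS.fMSP (S : SPS σ L) : Prop := ∀ A : Set σ, A.Finite → S.MSPon A

/-- The superposition principle holds on a set T. -/
def SPS.SPon (S : SPS σ L) (T : Set σ) : Prop :=
  ∀ p ∈ T, ∀ q ∈ T, p ≠ q → ∃ r ∈ S.bar {p, q}, r ≠ p ∧ r ≠ q

/-- A sector: a nonempty λ-closed set on which SP holds and which is
superposition-isolated from its complement. -/
def SPS.Sector (S : SPS σ L) (T : Set σ) : Prop :=
  T.Nonempty ∧ S.lamClosed T ∧ S.SPon T ∧
    ∀ p ∈ T, ∀ q, q ∉ T → S.bar {p, q} = ({p, q} : Set σ)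

/-- s ≈ t : s = t or there is a superposition of {s,t} distinct from both. -/
def SPS.rel (S : SPS σ L) (s t : σ) : Prop :=
  s = t ∨ ∃ r ∈ S.bar {s, t}, r ≠ s ∧ r ≠ t

namespace SPS

variable (S : SPS σ L)

theorem mem_bar_pair {p q r : σ} : r ∈ S.bar {p, q} ↔ S.xi p ∩ S.xi q ⊆ S.xi r := by
  simp only [SPS.bar, Set.mem_ofPred_eq, Set.biInter_pair]

theorem bar_pair_comm (p q : σ) : S.bar {p, q} = S.bar {q, p} := by
  rw [Set.pair_comm]

theorem left_mem_bar_pair (p q : σ) : p ∈ S.bar {p, q} :=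
  (S.mem_bar_pair).2 Set.inter_subset_left

theorem right_mem_bar_pair (p q : σ) : q ∈ S.bar {p, q} :=
  (S.mem_bar_pair).2 Set.inter_subset_right

theorem bar_mono {A B : Set σ} (h : A ⊆ B) : S.bar A ⊆ S.bar B :=
  fun _ hr => (Set.biInter_subset_biInter_left h).trans hr

theorem bar_singleton (hinj : ∀ p q : σ, S.xi p ⊆ S.xi q → p = q) (p : σ) :
    S.bar {p} = {p} := by
  ext r
  simp only [SPS.bar, Set.mem_ofPred_eq, Set.mem_singleton_iff, Set.iInter_iInter_eq_left]
  exact ⟨fun h => (hinj p r h).symm, fun h => h ▸ subset_rfl⟩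

theorem bar_pair_subset_of_mem {p q c : σ} (hc : c ∈ S.bar {p, q}) :
    S.bar {p, c} ⊆ S.bar {p, q} := by
  intro r hr
  rw [mem_bar_pair] at hc hr ⊢
  exact (Set.subset_inter Set.inter_subset_left hc).trans hr

theorem minSup_of_forall_not_mem_bar_diff {A : Set σ} {p : σ} (hp : p ∈ S.bar A)
    (hmin : ∀ a ∈ A, p ∉ S.bar (A \ {a})) : S.minSup A p := by
  refine ⟨hp, fun Q hQ hpQ => ?_⟩
  obtain ⟨a, haA, haQ⟩ := Set.exists_of_ssubset hQ
  exact hmin a haA (S.bar_mono (Set.subset_sdiff_singleton hQ.subset haQ) hpQ)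

theorem nMSP.mono {S : SPS σ L} {m n : ℕ} (hM : S.nMSP n) (hmn : m ≤ n) : S.nMSP m :=
  fun A hA hcard => hM A hA (hcard.trans hmn)

theorem nMSP.MSPon_pair {S : SPS σ L} (hM : S.nMSP 2) (p q : σ) : S.MSPon {p, q} :=
  hM _ (Set.toFinite _) ((Set.ncard_insert_le p {q}).trans (by simp))

theorem nMSP.MSPon_triple {S : SPS σ L} (hM : S.nMSP 3) (p q r : σ) : S.MSPon {p, q, r} :=
  hM _ (Set.toFinite _) <| (Set.ncard_insert_le p {q, r}).trans <| by
    have := Set.ncard_insert_le q {r}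
    rw [Set.ncard_singleton] at this
    omega

theorem ne_of_mem_bar_pair (hinj : ∀ p q : σ, S.xi p ⊆ S.xi q → p = q) {p q r : σ}
    (hr : r ∈ S.bar {p, q}) (hrp : r ≠ p) : p ≠ q := by
  rintro rfl
  rw [Set.pair_eq_singleton, S.bar_singleton hinj] at hr
  exact hrp hr

theorem mem_bar_pair_of_MSPon (hinj : ∀ p q : σ, S.xi p ⊆ S.xi q → p = q) {p q r : σ}
    (hM : S.MSPon {p, q}) (hr : r ∈ S.bar {p, q}) (hrp : r ≠ p) (hrq : r ≠ q) :
    p ∈ S.bar {q, r} := by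
  have hpq := S.ne_of_mem_bar_pair hinj hr hrp
  have hmin : S.minSup {p, q} r := by
    refine S.minSup_of_forall_not_mem_bar_diff hr ?_
    rintro a (rfl | rfl) hra
    · have := S.bar_mono (Set.sdiff_singleton_subset_iff.2 subset_rfl) hra
      exact hrq (by simpa [S.bar_singleton hinj] using this)
    · have := S.bar_mono (Set.sdiff_singleton_subset_iff.2 (Set.pair_comm _ _).le) hra
      exact hrp (by simpa [S.bar_singleton hinj] using this)
  obtain ⟨x, hxqr, hxp⟩ := hM r hmin {q} {p}
    ((Set.ssubset_iff_of_subset (by simp)).2 ⟨p, by simp, by simpa using hpq⟩)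
    ((Set.ssubset_iff_of_subset (by simp)).2 ⟨q, by simp, by simpa using hpq.symm⟩)
    (by simpa using hpq) (by rw [Set.singleton_union, Set.pair_comm])
  rw [S.bar_singleton hinj, Set.mem_singleton_iff] at hxp
  rwa [hxp, Set.singleton_union] at hxqr

theorem bar_pair_eq_of_mem (hinj : ∀ p q : σ, S.xi p ⊆ S.xi q → p = q) {p q r : σ}
    (hM : S.nMSP 2) (hr : r ∈ S.bar {p, q}) (hrp : r ≠ p) :
    S.bar {p, r} = S.bar {p, q} := by
  refine (S.bar_pair_subset_of_mem hr).antisymm ?_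
  by_cases hrq : r = q
  · rw [hrq]
  have hq : q ∈ S.bar {p, r} := by
    rw [S.bar_pair_comm] at hr
    exact S.mem_bar_pair_of_MSPon hinj (hM.MSPon_pair q p) hr hrq hrp
  exact S.bar_pair_subset_of_mem hq

theorem bar_pair_eq_of_mem_of_mem (hinj : ∀ p q : σ, S.xi p ⊆ S.xi q → p = q)
    (hM : S.nMSP 2) {t p q c : σ} (hct : c ≠ t) (hp : c ∈ S.bar {t, p}) (hq : c ∈ S.bar {t, q}) :
    S.bar {t, p} = S.bar {t, q} :=
  (S.bar_pair_eq_of_mem hinj hM hp hct).symm.trans (S.bar_pair_eq_of_mem hinj hM hq hct)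

theorem mem_bar_insert_of_mem_bar_pair {s t a : σ} {B : Set σ} (ha : a ∈ S.bar {s, t})
    (ht : t ∈ S.bar B) : a ∈ S.bar (insert s B) := by
  rw [mem_bar_pair] at ha
  simp only [SPS.bar, Set.mem_ofPred_eq, Set.biInter_insert] at ht ⊢
  exact (Set.inter_subset_inter_right _ ht).trans ha

theorem exists_mem_bar_pair_inter_of_minSup {s u b a : σ} (hM : S.MSPon {s, u, b})
    (hmin : S.minSup {s, u, b} a) (hbs : b ≠ s) (hbu : b ≠ u) :
    ∃ x ∈ S.bar {b, a}, x ∈ S.bar {s, u} := by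
  obtain ⟨x, hxba, hxsu⟩ := hM a hmin {b} {s, u}
    ((Set.ssubset_iff_of_subset (by simp)).2 ⟨s, by simp, by simpa using hbs.symm⟩)
    ((Set.ssubset_iff_of_subset (by intro z; simp; tauto)).2 ⟨b, by simp, by simp [hbs, hbu]⟩)
    (by simp [hbs, hbu]) (by ext; simp)
  exact ⟨x, Set.singleton_union ▸ hxba, hxsu⟩

theorem exists_mem_bar_pair_ne_of_not_mem (hinj : ∀ p q : σ, S.xi p ⊆ S.xi q → p = q)
    (hM : S.nMSP 3) {s t u a b : σ} (hu : u ∉ S.bar {s, t})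
    (ha : a ∈ S.bar {s, t}) (has : a ≠ s) (hat : a ≠ t)
    (hb : b ∈ S.bar {t, u}) (hbt : b ≠ t) (hbu : b ≠ u) :
    ∃ x ∈ S.bar {s, u}, x ≠ s ∧ x ≠ u := by
  have hM₂ : S.nMSP 2 := hM.mono (by norm_num)
  have line : ∀ {t p q c : σ}, c ≠ t → c ∈ S.bar {t, p} → c ∈ S.bar {t, q} →
      S.bar {t, p} = S.bar {t, q} := S.bar_pair_eq_of_mem_of_mem hinj hM₂
  have ha_ts : a ∈ S.bar {t, s} := S.bar_pair_comm s t ▸ ha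
  have hb_ut : b ∈ S.bar {u, t} := S.bar_pair_comm t u ▸ hb
  have hub : S.bar {u, b} = S.bar {u, t} := S.bar_pair_eq_of_mem hinj hM₂ hb_ut hbu
  have hb_st : b ∉ S.bar {s, t} := by
    intro h
    rw [S.bar_pair_comm] at h hu
    exact hu (line hbt h hb ▸ S.right_mem_bar_pair t u)
  have ha_tu : a ∉ S.bar {t, u} := by
    intro h
    rw [S.bar_pair_comm] at hu
    exact hu (line hat ha_ts h ▸ S.right_mem_bar_pair t u)
  have ha_ub : a ∉ S.bar {u, b} := by
    rw [hub, S.bar_pair_comm]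
    exact ha_tu
  have ha_su : a ∉ S.bar {s, u} := fun h => hu (line has ha h ▸ S.right_mem_bar_pair s u)
  have ha_sb : a ∉ S.bar {s, b} := fun h => hb_st (line has ha h ▸ S.right_mem_bar_pair s b)
  have hbs : b ≠ s := fun h => hb_st (h ▸ S.left_mem_bar_pair s t)
  have hmin : S.minSup {s, u, b} a := by
    refine S.minSup_of_forall_not_mem_bar_diff
      (S.mem_bar_insert_of_mem_bar_pair ha (hub ▸ S.right_mem_bar_pair u t)) ?_
    rintro x (rfl | rfl | rfl) hx
    · exact ha_ub (S.bar_mono (fun z => by simp; tauto) hx)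
    · exact ha_sb (S.bar_mono (fun z => by simp; tauto) hx)
    · exact ha_su (S.bar_mono (fun z => by simp; tauto) hx)
  obtain ⟨x, hxba, hxsu⟩ :=
    S.exists_mem_bar_pair_inter_of_minSup (hM.MSPon_triple s u b) hmin hbs hbu
  refine ⟨x, hxsu, ?_, ?_⟩
  · rintro rfl
    rw [S.bar_pair_comm] at hxba
    have hb_xa : b ∈ S.bar {x, a} := by
      rw [S.bar_pair_comm, ← line has.symm hxba (S.right_mem_bar_pair a x)]
      exact S.right_mem_bar_pair a b
    exact ha_sb (S.bar_pair_eq_of_mem hinj hM₂ hb_xa hbs ▸ S.right_mem_bar_pair x a)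
  · rintro rfl
    exact ha_ub (S.bar_pair_comm b x ▸ line hbu.symm hxba (S.right_mem_bar_pair b x) ▸
      S.right_mem_bar_pair b a)

theorem rel_refl (s : σ) : S.rel s s := Or.inl rfl

theorem rel_symm {s t : σ} : S.rel s t → S.rel t s
  | .inl h => .inl h.symm
  | .inr ⟨r, hr, hrs, hrt⟩ => .inr ⟨r, S.bar_pair_comm s t ▸ hr, hrt, hrs⟩

theorem rel_trans (hinj : ∀ p q : σ, S.xi p ⊆ S.xi q → p = q) (hM : S.nMSP 3) {s t u : σ}
    (hst : S.rel s t) (htu : S.rel t u) : S.rel s u := by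
  rcases hst with rfl | ⟨a, ha, has, hat⟩
  · exact htu
  rcases htu with rfl | ⟨b, hb, hbt, hbu⟩
  · exact .inr ⟨a, ha, has, hat⟩
  by_cases hsu : s = u
  · exact .inl hsu
  right
  by_cases hu : u ∈ S.bar {s, t}
  · refine ⟨t, ?_, (S.ne_of_mem_bar_pair hinj ha has).symm, S.ne_of_mem_bar_pair hinj hb hbt⟩
    rw [S.bar_pair_eq_of_mem hinj (hM.mono (by norm_num)) hu (Ne.symm hsu)]
    exact S.right_mem_bar_pair s t
  · exact S.exists_mem_bar_pair_ne_of_not_mem hinj hM hu ha has hat hb hbt hbu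

theorem rel_equivalence (hinj : ∀ p q : σ, S.xi p ⊆ S.xi q → p = q) (hM : S.nMSP 3) :
    Equivalence S.rel :=
  ⟨S.rel_refl, S.rel_symm, S.rel_trans hinj hM⟩

theorem rel_of_mem_bar_pair (hinj : ∀ p q : σ, S.xi p ⊆ S.xi q → p = q) (hM : S.nMSP 2)
    {p q r : σ} (hr : r ∈ S.bar {p, q}) (hrq : r ≠ q) : S.rel p r := by
  by_cases hrp : r = p
  · exact .inl hrp.symm
  refine .inr ⟨q, ?_, (S.ne_of_mem_bar_pair hinj hr hrp).symm, hrq.symm⟩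
  rw [S.bar_pair_eq_of_mem hinj hM hr hrp]
  exact S.right_mem_bar_pair p q

theorem sector_setOf_rel (hinj : ∀ p q : σ, S.xi p ⊆ S.xi q → p = q) (hM : S.nMSP 2)
    (hrel : Equivalence S.rel) (s : σ) : S.Sector {t | S.rel s t} := by
  refine ⟨⟨s, hrel.refl s⟩, ?_, ?_, ?_⟩
  · intro p hp q hq r hr
    by_cases hrq : r = q
    · rwa [hrq]
    exact hrel.trans hp (S.rel_of_mem_bar_pair hinj hM ((S.mem_bar_pair).2 hr) hrq)
  · intro p hp q hq hpq
    exact (hrel.trans (hrel.symm hp) hq).resolve_left hpq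
  · intro p hp q hq
    refine subset_antisymm (fun r hr => ?_)
      (Set.pair_subset (S.left_mem_bar_pair p q) (S.right_mem_bar_pair p q))
    by_contra hr'
    simp only [Set.mem_insert_iff, Set.mem_singleton_iff, not_or] at hr'
    exact hq (hrel.trans hp (.inr ⟨r, hr, hr'.1, hr'.2⟩))

variable {S}

theorem SPon.subset_of_mem_sector {T U : Set σ} (hT : S.SPon T) (hU : S.Sector U) {p : σ}
    (hpT : p ∈ T) (hpU : p ∈ U) : T ⊆ U := by
  intro t htT
  by_contra htU
  obtain ⟨r, hr, hrp, hrt⟩ := hT p hpT t htT (fun h => htU (h ▸ hpU))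
  rw [hU.2.2.2 p hpU t htU] at hr
  exact hr.elim hrp hrt

theorem Sector.eq_or_inter_eq_empty {T U : Set σ} (hT : S.Sector T) (hU : S.Sector U) :
    T = U ∨ T ∩ U = ∅ := by
  rcases (T ∩ U).eq_empty_or_nonempty with h | ⟨p, hpT, hpU⟩
  · exact .inr h
  · exact .inl ((hT.2.2.1.subset_of_mem_sector hU hpT hpU).antisymm
      (hU.2.2.1.subset_of_mem_sector hT hpU hpT))

end SPS

theorem stmt17 (S : SPS σ L) :
    -- two sectors are equal or disjoint
    (∀ T U : Set σ, S.Sector T → S.Sector U → T = U ∨ T ∩ U = ∅) ∧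
    (S.propA → S.nMSP 3 →
      Equivalence S.rel ∧
      (∀ s : σ, S.Sector {t : σ | S.rel s t}) ∧
      (⋃ s : σ, {t : σ | S.rel s t}) = Set.univ) := by
  refine ⟨fun T U hT hU => hT.eq_or_inter_eq_empty hU, fun hA hM => ?_⟩
  have hrel := S.rel_equivalence hA.2 hM
  exact ⟨hrel, S.sector_setOf_rel hA.2 (hM.mono (by norm_num)) hrel,
    Set.eq_univ_of_forall fun s => Set.mem_iUnion.2 ⟨s, S.rel_refl s⟩⟩
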